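/- For all p, g ∈ 𝔽₂[t] there exist quadratic forms m₀ and m₀' on finitely generated free 𝔽₂[t]-modules, each admitting a Lagrangian, such that the orthogonal direct sum P_{p, g} ⊕ m₀ is isometric to P_{p·g, 1} ⊕ m₀'. (That is, [P_{p,g}] = [P_{pg,1}] in the Witt group of quadratic forms over 𝔽₂[t].) -/

import Mathlib

/-- The quadratic form `P_{p,g}` on `𝔽₂[t]²`: `Q(x, y) = p·x² + x·y + g·y²`. -/
noncomputable def Ppg (p g : Polynomial (ZMod 2))
    (v : Polynomial (ZMod 2) × Polynomial (ZMod 2)) : Polynomial (ZMod 2) :=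
  p * v.1 ^ 2 + v.1 * v.2 + g * v.2 ^ 2

/-- `Q` is a quadratic form over `𝔽₂[t]`: `Q(c·v) = c²·Q(v)` and the polar form
`B(u, v) = Q(u+v) − Q(u) − Q(v)` is bilinear. -/
def IsQuadraticForm {M : Type*} [AddCommGroup M] [Module (Polynomial (ZMod 2)) M]
    (Q : M → Polynomial (ZMod 2)) : Prop :=
  (∀ (c : Polynomial (ZMod 2)) (v : M), Q (c • v) = c ^ 2 * Q v) ∧
  (∀ u : M, IsLinearMap (Polynomial (ZMod 2)) fun w => Q (u + w) - Q u - Q w)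

/-- `Q` admits a Lagrangian: a submodule `L` with `Q(L) = 0` and `L = L^⊥` with
respect to the polar form of `Q`. -/
def HasLagrangian {M : Type*} [AddCommGroup M] [Module (Polynomial (ZMod 2)) M]
    (Q : M → Polynomial (ZMod 2)) : Prop :=
  ∃ L : Submodule (Polynomial (ZMod 2)) M,
    (∀ v ∈ L, Q v = 0) ∧
    (L : Set M) = {v | ∀ l ∈ L, Q (v + l) - Q v - Q l = 0}

/-!
Write `P_{a,b} ~ P_{a',b'}` for equality of Witt classes. Since `P_{a,b}` is nondegenerate, the
diagonal is a Lagrangian of `P_{a,b} ⊕ P_{a,b}`, so `A ~ P_{a,b}` as soon as `A ⊕ P_{a,b}` is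
metabolic. This gives the moves `P_{ac²,b} ~ P_{a,bc²}` (Lagrangian `{((x, cy), (cx, y))}`) and
`P_{a,c} ⊕ P_{b,c} ~ P_{a+b,c}` (Lagrangian `{((x, y), (x, z), (x, y + z))}`); besides,
`P_{a,b} ≅ P_{b,a}` and the shear `(x, y) ↦ (x, y + cx)` gives `P_{a + bc² + c, b} ≅ P_{a,b}`.

Every `g ∈ 𝔽₂[t]` is `G² + t S²` with `S² = g'`, so `P_{p,g} ≅ P_{g,p}` splits as
`P_{G²,p} ⊕ P_{tS²,p} ~ P_{G²p,1} ⊕ P_{pS²,t}`, and it remains to show `P_{d,t} ~ P_{dt,1}`. This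
goes by induction on `deg d`: for `d = D² + t E²`, the shear turns the summand `P_{tE²,t}` into
`P_{E,t}`, and `deg E < deg d`.
-/

open Polynomial
open QuadraticMap (polar polar_comm)

notation "𝔽₂[X]" => Polynomial (ZMod 2)

def orthSum {R M N : Type*} [Add R] (A : M → R) (B : N → R) : M × N → R := fun v => A v.1 + B v.2

infixl:65 " ⊕ₒ " => orthSum

theorem polar_orthSum {R M N : Type*} [AddCommGroup R] [AddCommGroup M] [AddCommGroup N]
    (A : M → R) (B : N → R) (u w : M × N) :
    polar (A ⊕ₒ B) u w = polar A u.1 w.1 + polar B u.2 w.2 := by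
  simp only [polar, orthSum, Prod.fst_add, Prod.snd_add]
  abel

section Isometric

variable {R M N P M' N' : Type*} [Semiring R]
  [AddCommMonoid M] [Module R M] [AddCommMonoid N] [Module R N] [AddCommMonoid P] [Module R P]
  [AddCommMonoid M'] [Module R M'] [AddCommMonoid N'] [Module R N']

def Isometric (A : M → R) (B : N → R) : Prop :=
  ∃ e : M ≃ₗ[R] N, ∀ v, B (e v) = A v

theorem Isometric.refl (A : M → R) : Isometric A A := ⟨LinearEquiv.refl R M, fun _ => rfl⟩

theorem Isometric.symm {A : M → R} {B : N → R} (h : Isometric A B) : Isometric B A := by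
  obtain ⟨e, he⟩ := h
  exact ⟨e.symm, fun w => by rw [← he, e.apply_symm_apply]⟩

theorem Isometric.trans {A : M → R} {B : N → R} {C : P → R} (h₁ : Isometric A B)
    (h₂ : Isometric B C) : Isometric A C := by
  obtain ⟨e₁, he₁⟩ := h₁
  obtain ⟨e₂, he₂⟩ := h₂
  exact ⟨e₁.trans e₂, fun v => by simp [he₁, he₂]⟩

instance : @Trans (M → R) (N → R) (P → R) Isometric Isometric Isometric := ⟨Isometric.trans⟩

theorem isometric_comp (B : N → R) (e : M ≃ₗ[R] N) : Isometric (B ∘ e) B := ⟨e, fun _ => rfl⟩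

theorem Isometric.orthSum {A : M → R} {A' : M' → R} {B : N → R} {B' : N' → R}
    (hA : Isometric A A') (hB : Isometric B B') : Isometric (A ⊕ₒ B) (A' ⊕ₒ B') := by
  obtain ⟨e₁, he₁⟩ := hA
  obtain ⟨e₂, he₂⟩ := hB
  exact ⟨e₁.prodCongr e₂, fun v => by simp [_root_.orthSum, he₁, he₂]⟩

theorem isometric_orthSum_comm (A : M → R) (B : N → R) : Isometric (A ⊕ₒ B) (B ⊕ₒ A) :=
  ⟨LinearEquiv.prodComm R M N, fun _ => add_comm _ _⟩

theorem isometric_orthSum_assoc (A : M → R) (B : N → R) (C : P → R) :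
    Isometric ((A ⊕ₒ B) ⊕ₒ C) (A ⊕ₒ (B ⊕ₒ C)) :=
  ⟨LinearEquiv.prodAssoc R M N P, fun _ => (add_assoc _ _ _).symm⟩

theorem isometric_orthSum_orthSum_comm (A : M → R) (B : N → R) (A' : M' → R) (B' : N' → R) :
    Isometric ((A ⊕ₒ B) ⊕ₒ (A' ⊕ₒ B')) ((A ⊕ₒ A') ⊕ₒ (B ⊕ₒ B')) :=
  ⟨LinearEquiv.prodProdProdComm R M N M' N', fun _ => add_add_add_comm _ _ _ _⟩

end Isometric

section Metabolic

variable {M N : Type*} [AddCommGroup M] [Module 𝔽₂[X] M] [AddCommGroup N]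
  [Module 𝔽₂[X] N]

def IsMetabolic (Q : M → 𝔽₂[X]) : Prop := IsQuadraticForm Q ∧ HasLagrangian Q

theorem isQuadraticForm_iff {Q : M → 𝔽₂[X]} : IsQuadraticForm Q ↔
    (∀ (c : 𝔽₂[X]) v, Q (c • v) = c ^ 2 * Q v) ∧
      ∀ u, ∃ f : M →ₗ[𝔽₂[X]] 𝔽₂[X], ∀ w, polar Q u w = f w := by
  refine and_congr_right fun _ => forall_congr' fun u => ⟨fun h => ⟨IsLinearMap.mk' _ h,
    fun _ => rfl⟩, fun ⟨f, hf⟩ => ?_⟩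
  rw [show (fun w => Q (u + w) - Q u - Q w) = f from funext hf]
  exact f.isLinear

theorem IsQuadraticForm.map_zero {Q : M → 𝔽₂[X]} (hQ : IsQuadraticForm Q) : Q 0 = 0 := by
  simpa using hQ.1 0 0

theorem IsQuadraticForm.polar_sub_left {Q : M → 𝔽₂[X]} (hQ : IsQuadraticForm Q)
    (u v w : M) : polar Q (u - v) w = polar Q u w - polar Q v w := by
  simp only [polar_comm Q _ w]
  exact (IsLinearMap.mk' _ (hQ.2 w)).map_sub u v

theorem hasLagrangian_iff {Q : M → 𝔽₂[X]} : HasLagrangian Q ↔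
    ∃ L : Submodule 𝔽₂[X] M,
      (∀ v ∈ L, Q v = 0) ∧ ∀ v, (∀ l ∈ L, polar Q v l = 0) → v ∈ L := by
  refine ⟨fun ⟨L, hL, hperp⟩ => ⟨L, hL, fun v hv => ?_⟩, fun ⟨L, hL, hperp⟩ => ⟨L, hL, ?_⟩⟩
  · rw [← SetLike.mem_coe, hperp]
    exact hv
  · refine Set.ext fun v => ⟨fun hv l hl => ?_, hperp v⟩
    simp [hL _ hv, hL _ hl, hL _ (L.add_mem hv hl)]

theorem isMetabolic_zero : IsMetabolic (0 : M → 𝔽₂[X]) :=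
  ⟨isQuadraticForm_iff.2 ⟨fun _ _ => by simp, fun _ => ⟨0, fun _ => by simp [polar]⟩⟩,
    hasLagrangian_iff.2 ⟨⊤, fun _ _ => rfl, fun _ _ => Submodule.mem_top⟩⟩

theorem IsMetabolic.of_isometric {A : M → 𝔽₂[X]} {B : N → 𝔽₂[X]}
    (h : Isometric A B) (hB : IsMetabolic B) : IsMetabolic A := by
  obtain ⟨e, he⟩ := h
  obtain ⟨hBq, hBL⟩ := hB
  have hpolar (u w : M) : polar A u w = polar B (e u) (e w) := by simp [polar, ← he]
  refine ⟨isQuadraticForm_iff.2 ⟨fun c v => by simp [← he, hBq.1], fun u => ?_⟩, ?_⟩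
  · obtain ⟨f, hf⟩ := (isQuadraticForm_iff.1 hBq).2 (e u)
    exact ⟨f ∘ₗ e.toLinearMap, fun w => by simp [hpolar, hf]⟩
  obtain ⟨L, hL, hperp⟩ := hasLagrangian_iff.1 hBL
  refine hasLagrangian_iff.2 ⟨L.comap e.toLinearMap, fun v hv => by rw [← he]; exact hL _ hv,
    fun v hv => hperp _ fun l hl => ?_⟩
  simpa [hpolar] using hv (e.symm l) (by simpa using hl)

theorem IsQuadraticForm.orthSum {A : M → 𝔽₂[X]} {B : N → 𝔽₂[X]}
    (hA : IsQuadraticForm A) (hB : IsQuadraticForm B) : IsQuadraticForm (A ⊕ₒ B) := by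
  refine isQuadraticForm_iff.2 ⟨fun c v => ?_, fun u => ?_⟩
  · simp [_root_.orthSum, hA.1, hB.1, mul_add]
  · obtain ⟨f, hf⟩ := (isQuadraticForm_iff.1 hA).2 u.1
    obtain ⟨g, hg⟩ := (isQuadraticForm_iff.1 hB).2 u.2
    exact ⟨f ∘ₗ LinearMap.fst _ _ _ + g ∘ₗ LinearMap.snd _ _ _, fun w => by
      simp [polar_orthSum, hf, hg]⟩

theorem IsMetabolic.orthSum {A : M → 𝔽₂[X]} {B : N → 𝔽₂[X]} (hA : IsMetabolic A)
    (hB : IsMetabolic B) : IsMetabolic (A ⊕ₒ B) := by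
  obtain ⟨L₁, hL₁, hperp₁⟩ := hasLagrangian_iff.1 hA.2
  obtain ⟨L₂, hL₂, hperp₂⟩ := hasLagrangian_iff.1 hB.2
  refine ⟨hA.1.orthSum hB.1, hasLagrangian_iff.2 ⟨L₁.prod L₂, fun v hv => by
    simp [_root_.orthSum, hL₁ _ hv.1, hL₂ _ hv.2], fun v hv => ⟨hperp₁ _ fun l hl => ?_,
    hperp₂ _ fun l hl => ?_⟩⟩⟩
  · have h := hv (l, 0) ⟨hl, L₂.zero_mem⟩
    simp only [polar_orthSum] at h
    simpa [polar, hB.1.map_zero] using h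
  · have h := hv (0, l) ⟨L₁.zero_mem, hl⟩
    simp only [polar_orthSum] at h
    simpa [polar, hA.1.map_zero] using h

theorem isMetabolic_orthSum_self {Q : M → 𝔽₂[X]} (hQ : IsQuadraticForm Q)
    (hnd : ∀ u, (∀ w, polar Q u w = 0) → u = 0) : IsMetabolic (Q ⊕ₒ Q) := by
  let diag := LinearMap.ker (LinearMap.fst 𝔽₂[X] M M - LinearMap.snd _ _ _)
  have hdiag (v : M × M) : v ∈ diag ↔ v.1 = v.2 := by
    simp [diag, sub_eq_zero]
  refine ⟨hQ.orthSum hQ, hasLagrangian_iff.2 ⟨diag, fun v hv => ?_, fun v hv => ?_⟩⟩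
  · simp [orthSum, (hdiag v).1 hv, CharTwo.add_self_eq_zero]
  · refine (hdiag v).2 (sub_eq_zero.1 (hnd _ fun w => ?_))
    have h := hv (w, w) ((hdiag _).2 rfl)
    rwa [polar_orthSum, ← CharTwo.sub_eq_add, ← hQ.polar_sub_left] at h

end Metabolic

section WittEquiv

variable {M N P P' M' N' : Type*} [AddCommGroup M] [Module 𝔽₂[X] M] [AddCommGroup N]
  [Module 𝔽₂[X] N] [AddCommGroup P] [Module 𝔽₂[X] P] [AddCommGroup P'] [Module 𝔽₂[X] P']
  [AddCommGroup M'] [Module 𝔽₂[X] M'] [AddCommGroup N'] [Module 𝔽₂[X] N']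

def WittEquiv (A : M → 𝔽₂[X]) (B : N → 𝔽₂[X]) : Prop :=
  ∃ (k l : ℕ) (Q₀ : (Fin k → 𝔽₂[X]) → 𝔽₂[X]) (Q₀' : (Fin l → 𝔽₂[X]) → 𝔽₂[X]),
    IsQuadraticForm Q₀ ∧ IsQuadraticForm Q₀' ∧ HasLagrangian Q₀ ∧ HasLagrangian Q₀' ∧
      Isometric (A ⊕ₒ Q₀) (B ⊕ₒ Q₀')

theorem WittEquiv.of_isometric_orthSum [Module.Free 𝔽₂[X] P] [Module.Finite 𝔽₂[X] P]
    [Module.Free 𝔽₂[X] P'] [Module.Finite 𝔽₂[X] P'] {A : M → 𝔽₂[X]} {B : N → 𝔽₂[X]}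
    {Z : P → 𝔽₂[X]} {Z' : P' → 𝔽₂[X]} (hZ : IsMetabolic Z) (hZ' : IsMetabolic Z')
    (h : Isometric (A ⊕ₒ Z) (B ⊕ₒ Z')) : WittEquiv A B := by
  let τ := (Module.finBasis 𝔽₂[X] P).equivFun.symm
  let τ' := (Module.finBasis 𝔽₂[X] P').equivFun.symm
  have hZτ := hZ.of_isometric (isometric_comp Z τ)
  have hZτ' := hZ'.of_isometric (isometric_comp Z' τ')
  exact ⟨_, _, _, _, hZτ.1, hZτ'.1, hZτ.2, hZτ'.2, calc
    Isometric (A ⊕ₒ (Z ∘ τ)) (A ⊕ₒ Z) := (Isometric.refl A).orthSum (isometric_comp Z τ)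
    Isometric _ (B ⊕ₒ Z') := h
    Isometric _ (B ⊕ₒ (Z' ∘ τ')) := ((Isometric.refl B).orthSum (isometric_comp Z' τ')).symm⟩

theorem Isometric.wittEquiv {A : M → 𝔽₂[X]} {B : N → 𝔽₂[X]} (h : Isometric A B) :
    WittEquiv A B :=
  .of_isometric_orthSum (isMetabolic_zero (M := Fin 0 → 𝔽₂[X])) isMetabolic_zero
    (h.orthSum (.refl 0))

theorem WittEquiv.symm {A : M → 𝔽₂[X]} {B : N → 𝔽₂[X]} (h : WittEquiv A B) :
    WittEquiv B A := by
  obtain ⟨k, l, Q₀, Q₀', hQ₀, hQ₀', hL₀, hL₀', h⟩ := h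
  exact ⟨l, k, Q₀', Q₀, hQ₀', hQ₀, hL₀', hL₀, h.symm⟩

theorem WittEquiv.trans {A : M → 𝔽₂[X]} {B : N → 𝔽₂[X]} {C : P → 𝔽₂[X]}
    (h₁ : WittEquiv A B) (h₂ : WittEquiv B C) : WittEquiv A C := by
  obtain ⟨k₁, l₁, Z₁, Z₁', hZ₁, hZ₁', hL₁, hL₁', h₁⟩ := h₁
  obtain ⟨k₂, l₂, Z₂, Z₂', hZ₂, hZ₂', hL₂, hL₂', h₂⟩ := h₂
  refine .of_isometric_orthSum (IsMetabolic.orthSum ⟨hZ₁, hL₁⟩ ⟨hZ₂, hL₂⟩)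
    (IsMetabolic.orthSum ⟨hZ₂', hL₂'⟩ ⟨hZ₁', hL₁'⟩) ?_
  calc
    Isometric (A ⊕ₒ (Z₁ ⊕ₒ Z₂)) ((A ⊕ₒ Z₁) ⊕ₒ Z₂) := (isometric_orthSum_assoc _ _ _).symm
    Isometric _ ((B ⊕ₒ Z₁') ⊕ₒ Z₂) := h₁.orthSum (.refl _)
    Isometric _ (B ⊕ₒ (Z₁' ⊕ₒ Z₂)) := isometric_orthSum_assoc _ _ _
    Isometric _ (B ⊕ₒ (Z₂ ⊕ₒ Z₁')) := (Isometric.refl _).orthSum (isometric_orthSum_comm _ _)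
    Isometric _ ((B ⊕ₒ Z₂) ⊕ₒ Z₁') := (isometric_orthSum_assoc _ _ _).symm
    Isometric _ ((C ⊕ₒ Z₂') ⊕ₒ Z₁') := h₂.orthSum (.refl _)
    Isometric _ (C ⊕ₒ (Z₂' ⊕ₒ Z₁')) := isometric_orthSum_assoc _ _ _

instance : @Trans (M → 𝔽₂[X]) (N → 𝔽₂[X]) (P → 𝔽₂[X]) WittEquiv WittEquiv
    WittEquiv :=
  ⟨WittEquiv.trans⟩

theorem WittEquiv.orthSum {A : M → 𝔽₂[X]} {A' : M' → 𝔽₂[X]} {B : N → 𝔽₂[X]}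
    {B' : N' → 𝔽₂[X]} (hA : WittEquiv A A') (hB : WittEquiv B B') :
    WittEquiv (A ⊕ₒ B) (A' ⊕ₒ B') := by
  obtain ⟨k₁, l₁, Z₁, Z₁', hZ₁, hZ₁', hL₁, hL₁', hA⟩ := hA
  obtain ⟨k₂, l₂, Z₂, Z₂', hZ₂, hZ₂', hL₂, hL₂', hB⟩ := hB
  refine .of_isometric_orthSum (IsMetabolic.orthSum ⟨hZ₁, hL₁⟩ ⟨hZ₂, hL₂⟩)
    (IsMetabolic.orthSum ⟨hZ₁', hL₁'⟩ ⟨hZ₂', hL₂'⟩) ?_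
  calc
    Isometric ((A ⊕ₒ B) ⊕ₒ (Z₁ ⊕ₒ Z₂)) ((A ⊕ₒ Z₁) ⊕ₒ (B ⊕ₒ Z₂)) :=
      isometric_orthSum_orthSum_comm _ _ _ _
    Isometric _ ((A' ⊕ₒ Z₁') ⊕ₒ (B' ⊕ₒ Z₂')) := hA.orthSum hB
    Isometric _ ((A' ⊕ₒ B') ⊕ₒ (Z₁' ⊕ₒ Z₂')) := isometric_orthSum_orthSum_comm _ _ _ _

theorem WittEquiv.of_isMetabolic_orthSum [Module.Free 𝔽₂[X] M] [Module.Finite 𝔽₂[X] M]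
    [Module.Free 𝔽₂[X] N] [Module.Finite 𝔽₂[X] N] {A : M → 𝔽₂[X]}
    {B : N → 𝔽₂[X]} (hAB : IsMetabolic (A ⊕ₒ B)) (hBB : IsMetabolic (B ⊕ₒ B)) :
    WittEquiv A B :=
  .of_isometric_orthSum hBB hAB <| calc
    Isometric (A ⊕ₒ (B ⊕ₒ B)) ((A ⊕ₒ B) ⊕ₒ B) := (isometric_orthSum_assoc _ _ _).symm
    Isometric _ (B ⊕ₒ (A ⊕ₒ B)) := isometric_orthSum_comm _ _

end WittEquiv

theorem polar_Ppg (a b : 𝔽₂[X]) (u w : 𝔽₂[X] × 𝔽₂[X]) :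
    polar (Ppg a b) u w = u.1 * w.2 + u.2 * w.1 := by
  simp only [polar, Ppg, Prod.fst_add, Prod.snd_add]
  grind

theorem isQuadraticForm_Ppg (a b : 𝔽₂[X]) : IsQuadraticForm (Ppg a b) := by
  refine isQuadraticForm_iff.2 ⟨fun c v => ?_, fun u => ⟨u.1 • LinearMap.snd _ _ _ +
    u.2 • LinearMap.fst _ _ _, fun w => by simp [polar_Ppg]⟩⟩
  simp only [Ppg, Prod.smul_fst, Prod.smul_snd, smul_eq_mul]
  ring

theorem isMetabolic_Ppg_orthSum_self (a b : 𝔽₂[X]) : IsMetabolic (Ppg a b ⊕ₒ Ppg a b) := by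
  refine isMetabolic_orthSum_self (isQuadraticForm_Ppg a b) fun u hu => ?_
  have h₁ := hu (1, 0)
  have h₂ := hu (0, 1)
  simp only [polar_Ppg] at h₁ h₂
  ext <;> simp_all

theorem isMetabolic_Ppg_zero_right (a : 𝔽₂[X]) : IsMetabolic (Ppg a 0) := by
  refine ⟨isQuadraticForm_Ppg a 0, hasLagrangian_iff.2 ⟨LinearMap.ker (LinearMap.fst _ _ _),
    fun v hv => ?_, fun v hv => ?_⟩⟩
  · simp_all [Ppg]
  · simpa [polar_Ppg] using hv (0, 1) (by simp)

theorem isometric_Ppg_swap (a b : 𝔽₂[X]) : Isometric (Ppg a b) (Ppg b a) := by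
  refine ⟨LinearEquiv.prodComm _ _ _, fun v => ?_⟩
  simp only [Ppg, LinearEquiv.prodComm_apply, Prod.fst_swap, Prod.snd_swap]
  ring

theorem isMetabolic_Ppg_zero_left (b : 𝔽₂[X]) : IsMetabolic (Ppg 0 b) :=
  (isMetabolic_Ppg_zero_right b).of_isometric (isometric_Ppg_swap 0 b)

theorem isometric_Ppg_of_sub_eq {a a' b c : 𝔽₂[X]} (h : a - a' = b * c ^ 2 + c) :
    Isometric (Ppg a b) (Ppg a' b) := by
  refine ⟨(LinearEquiv.refl _ _).skewProd (LinearEquiv.refl _ _) (c • LinearMap.id), fun v => ?_⟩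
  simp only [Ppg, LinearEquiv.skewProd_apply, LinearEquiv.refl_apply, LinearMap.smul_apply,
    LinearMap.id_apply, smul_eq_mul]
  grind

theorem WittEquiv.of_isMetabolic_orthSum_Ppg {M : Type*} [AddCommGroup M] [Module 𝔽₂[X] M]
    [Module.Free 𝔽₂[X] M] [Module.Finite 𝔽₂[X] M] {A : M → 𝔽₂[X]} {a b : 𝔽₂[X]}
    (h : IsMetabolic (A ⊕ₒ Ppg a b)) :
    WittEquiv A (Ppg a b) :=
  .of_isMetabolic_orthSum h (isMetabolic_Ppg_orthSum_self a b)

theorem isMetabolic_Ppg_mul_sq_orthSum (a b c : 𝔽₂[X]) :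
    IsMetabolic (Ppg (a * c ^ 2) b ⊕ₒ Ppg a (b * c ^ 2)) := by
  let f : 𝔽₂[X] × 𝔽₂[X] →ₗ[𝔽₂[X]] (𝔽₂[X] × 𝔽₂[X]) × (𝔽₂[X] × 𝔽₂[X]) :=
    ((LinearMap.fst _ _ _).prod (c • LinearMap.snd _ _ _)).prod
      ((c • LinearMap.fst _ _ _).prod (LinearMap.snd _ _ _))
  have hf (x y : 𝔽₂[X]) : f (x, y) = ((x, c * y), (c * x, y)) := rfl
  refine ⟨(isQuadraticForm_Ppg _ _).orthSum (isQuadraticForm_Ppg _ _), hasLagrangian_iff.2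
    ⟨LinearMap.range f, ?_, fun v hv => ?_⟩⟩
  · rintro _ ⟨⟨x, y⟩, rfl⟩
    simp only [hf, orthSum, Ppg]
    grind
  · have h₁ := hv _ ⟨(1, 0), rfl⟩
    have h₂ := hv _ ⟨(0, 1), rfl⟩
    simp only [hf, polar_orthSum, polar_Ppg] at h₁ h₂
    exact ⟨(v.1.1, v.2.2), by ext <;> simp only [hf] <;> grind⟩

theorem isMetabolic_Ppg_add_orthSum (a b c : 𝔽₂[X]) :
    IsMetabolic ((Ppg a c ⊕ₒ Ppg b c) ⊕ₒ Ppg (a + b) c) := by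
  let f : (𝔽₂[X] × 𝔽₂[X]) × 𝔽₂[X] →ₗ[𝔽₂[X]]
      ((𝔽₂[X] × 𝔽₂[X]) × (𝔽₂[X] × 𝔽₂[X])) × (𝔽₂[X] × 𝔽₂[X]) :=
    ((LinearMap.fst _ _ _).prod ((LinearMap.fst _ _ _ ∘ₗ LinearMap.fst _ _ _).prod
      (LinearMap.snd _ _ _))).prod ((LinearMap.fst _ _ _ ∘ₗ LinearMap.fst _ _ _).prod
      (LinearMap.snd _ _ _ ∘ₗ LinearMap.fst _ _ _ + LinearMap.snd _ _ _))
  have hf (x y z : 𝔽₂[X]) : f ((x, y), z) = (((x, y), (x, z)), (x, y + z)) := rfl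
  refine ⟨((isQuadraticForm_Ppg _ _).orthSum (isQuadraticForm_Ppg _ _)).orthSum
    (isQuadraticForm_Ppg _ _), hasLagrangian_iff.2 ⟨LinearMap.range f, ?_, fun v hv => ?_⟩⟩
  · rintro _ ⟨⟨⟨x, y⟩, z⟩, rfl⟩
    simp only [hf, orthSum, Ppg]
    grind
  · have h₁ := hv _ ⟨((1, 0), 0), rfl⟩
    have h₂ := hv _ ⟨((0, 1), 0), rfl⟩
    have h₃ := hv _ ⟨((0, 0), 1), rfl⟩
    simp only [hf, polar_orthSum, polar_Ppg] at h₁ h₂ h₃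
    exact ⟨((v.1.1.1, v.1.1.2), v.1.2.2), by ext <;> simp only [hf] <;> grind⟩

theorem derivative_derivative_eq_zero {R : Type*} [CommRing R] [CharP R 2] (f : R[X]) :
    derivative (derivative f) = 0 := by
  ext n
  have h : (((n + 1) * (n + 1 + 1) : ℕ) : R) = 0 :=
    (CharP.cast_eq_zero_iff R 2 _).2 (Nat.even_mul_succ_self _).two_dvd
  simp only [coeff_derivative, coeff_zero]
  push_cast at h ⊢
  linear_combination f.coeff (n + 1 + 1) * h

theorem exists_eq_sq_add_X_mul_sq (f : 𝔽₂[X]) :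
    ∃ D E : 𝔽₂[X], f = D ^ 2 + X * E ^ 2 ∧ E ^ 2 = derivative f := by
  have hsq {g : 𝔽₂[X]} (hg : derivative g = 0) : (contract 2 g) ^ 2 = g := by
    rw [← ZMod.expand_card, expand_contract 2 hg two_ne_zero]
  have hd := derivative_derivative_eq_zero f
  refine ⟨contract 2 (f + X * derivative f), contract 2 (derivative f), ?_, hsq hd⟩
  rw [hsq (by simp [hd, CharTwo.add_self_eq_zero]), hsq hd]
  grind

theorem degree_lt_of_sq_eq_derivative {f E : 𝔽₂[X]} (hf : f ≠ 0)
    (hE : E ^ 2 = derivative f) : E.degree < f.degree := by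
  rcases eq_or_ne E 0 with rfl | hE0
  · simpa [bot_lt_iff_ne_bot] using hf
  calc E.degree ≤ (E ^ 2).degree :=
      degree_le_of_dvd (dvd_pow_self E two_ne_zero) (pow_ne_zero 2 hE0)
    _ < f.degree := hE ▸ degree_derivative_lt hf

theorem wittEquiv_Ppg_mul_sq (a b c : 𝔽₂[X]) :
    WittEquiv (Ppg (a * c ^ 2) b) (Ppg a (b * c ^ 2)) :=
  .of_isMetabolic_orthSum_Ppg (isMetabolic_Ppg_mul_sq_orthSum a b c)

theorem wittEquiv_Ppg_add (a b c : 𝔽₂[X]) :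
    WittEquiv (Ppg a c ⊕ₒ Ppg b c) (Ppg (a + b) c) :=
  .of_isMetabolic_orthSum_Ppg (isMetabolic_Ppg_add_orthSum a b c)

theorem wittEquiv_Ppg_sq (a b : 𝔽₂[X]) : WittEquiv (Ppg (a ^ 2) b) (Ppg (a ^ 2 * b) 1) := by
  have h := wittEquiv_Ppg_mul_sq 1 b a
  rw [one_mul, mul_comm b] at h
  exact h.trans (isometric_Ppg_swap 1 (a ^ 2 * b)).wittEquiv

theorem wittEquiv_Ppg_X (d : 𝔽₂[X]) : WittEquiv (Ppg d X) (Ppg (d * X) 1) := by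
  induction d using degree_lt_wf.induction with
  | _ d ih =>
    rcases eq_or_ne d 0 with rfl | hd
    · rw [zero_mul]
      exact .of_isMetabolic_orthSum_Ppg
        ((isMetabolic_Ppg_zero_left X).orthSum (isMetabolic_Ppg_zero_left 1))
    obtain ⟨D, E, rfl, hE⟩ := exists_eq_sq_add_X_mul_sq d
    calc
      WittEquiv (Ppg (D ^ 2 + X * E ^ 2) X) (Ppg (D ^ 2) X ⊕ₒ Ppg (X * E ^ 2) X) :=
        (wittEquiv_Ppg_add _ _ _).symm
      WittEquiv _ (Ppg (D ^ 2 * X) 1 ⊕ₒ Ppg (E * X) 1) :=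
        (wittEquiv_Ppg_sq D X).orthSum <|
          (isometric_Ppg_of_sub_eq (c := E) (by grind)).wittEquiv.trans
            (ih E (degree_lt_of_sq_eq_derivative hd hE))
      WittEquiv _ (Ppg (D ^ 2 * X + E * X) 1) := wittEquiv_Ppg_add _ _ _
      WittEquiv _ (Ppg ((D ^ 2 + X * E ^ 2) * X) 1) :=
        (isometric_Ppg_of_sub_eq (c := X * E) (by grind)).wittEquiv

/-- For all `p, g ∈ 𝔽₂[t]` there are quadratic forms `m₀`, `m₀'` on finitely generated
free `𝔽₂[t]`-modules, each admitting a Lagrangian, with `P_{p,g} ⊕ m₀` isometric to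
`P_{pg,1} ⊕ m₀'`; that is, `[P_{p,g}] = [P_{pg,1}]` in the Witt group. -/
theorem witt_Ppg_eq_Ppg_one (p g : Polynomial (ZMod 2)) :
    ∃ (k l : ℕ)
      (Q₀ : (Fin k → Polynomial (ZMod 2)) → Polynomial (ZMod 2))
      (Q₀' : (Fin l → Polynomial (ZMod 2)) → Polynomial (ZMod 2)),
      IsQuadraticForm Q₀ ∧ IsQuadraticForm Q₀' ∧
      HasLagrangian Q₀ ∧ HasLagrangian Q₀' ∧
      ∃ e : ((Polynomial (ZMod 2) × Polynomial (ZMod 2)) × (Fin k → Polynomial (ZMod 2)))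
            ≃ₗ[Polynomial (ZMod 2)]
            ((Polynomial (ZMod 2) × Polynomial (ZMod 2)) × (Fin l → Polynomial (ZMod 2))),
        ∀ v, Ppg (p * g) 1 (e v).1 + Q₀' (e v).2 = Ppg p g v.1 + Q₀ v.2 := by
  obtain ⟨G, S, rfl, -⟩ := exists_eq_sq_add_X_mul_sq g
  show WittEquiv (Ppg p (G ^ 2 + X * S ^ 2)) (Ppg (p * (G ^ 2 + X * S ^ 2)) 1)
  calc
    WittEquiv (Ppg p (G ^ 2 + X * S ^ 2)) (Ppg (G ^ 2 + X * S ^ 2) p) :=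
      (isometric_Ppg_swap _ _).wittEquiv
    WittEquiv _ (Ppg (G ^ 2) p ⊕ₒ Ppg (X * S ^ 2) p) := (wittEquiv_Ppg_add _ _ _).symm
    WittEquiv _ (Ppg (G ^ 2 * p) 1 ⊕ₒ Ppg (p * S ^ 2 * X) 1) :=
      (wittEquiv_Ppg_sq G p).orthSum <| (wittEquiv_Ppg_mul_sq X p S).trans <|
        (isometric_Ppg_swap _ _).wittEquiv.trans (wittEquiv_Ppg_X _)
    WittEquiv _ (Ppg (G ^ 2 * p + p * S ^ 2 * X) 1) := wittEquiv_Ppg_add _ _ _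
    _ = Ppg (p * (G ^ 2 + X * S ^ 2)) 1 := by congr 1; ring
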